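/- arXiv:1405.2813 — 10 statements merged into one kernel-verified Lean document; each statement's English description precedes it below -/
import Mathlib

section
/- Let 𝕋 be a time scale, f : 𝕋 → ℝ, t ∈ 𝕋^κ, and α ∈ (0,1] with α = 1/q for some odd natural number q. If t is right-dense and f has a fractional derivative of order α at t, then f is continuous at t as a function on 𝕋 (i.e., for every ε > 0 there exists δ > 0 such that |f(t) − f(s)| ≤ ε for all s ∈ 𝕋 with |t − s| < δ). -/
open Real Set Classical

/-- Forward jump operator of a time scale, with the convention `σ t = t`
when `{s ∈ T | t < s}` is empty. -/
noncomputable def tsSigma (T : Set ℝ) (t : ℝ) : ℝ :=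
  if ({s | s ∈ T ∧ t < s}).Nonempty then sInf {s | s ∈ T ∧ t < s} else t

/-- Graininess function `μ t = σ t - t`. -/
noncomputable def tsMu (T : Set ℝ) (t : ℝ) : ℝ :=
  tsSigma T t - t

/-- Backward jump operator, with the convention `ρ t = t`
when `{s ∈ T | s < t}` is empty. -/
noncomputable def tsRho (T : Set ℝ) (t : ℝ) : ℝ :=
  if ({s | s ∈ T ∧ s < t}).Nonempty then sSup {s | s ∈ T ∧ s < t} else t

/-- `T^κ`: `T` with its maximum removed if the maximum exists and is
left-scattered; `T` otherwise. -/
def tsKappa (T : Set ℝ) : Set ℝ :=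
  {t | t ∈ T ∧ ¬ (IsGreatest T t ∧ tsRho T t < t)}

/-- `t` is right-scattered when `σ t > t`. -/
def RightScattered (T : Set ℝ) (t : ℝ) : Prop :=
  t < tsSigma T t

/-- `t` is right-dense when `t < sup T` and `σ t = t`. -/
def RightDense (T : Set ℝ) (t : ℝ) : Prop :=
  (∃ s ∈ T, t < s) ∧ tsSigma T t = t

/-- Signed real power `x^α = sign(x) · |x|^α` (agrees with `rpow` for `x ≥ 0`). -/
noncomputable def fpow (α x : ℝ) : ℝ := Real.sign x * |x| ^ α

/-- `α = 1/q` for some odd natural number `q`. -/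
def IsOddRecip (α : ℝ) : Prop := ∃ q : ℕ, Odd q ∧ α = 1 / (q : ℝ)

/-- `L` is a fractional derivative of `f` of order `α` at `t` on the time scale `T`. -/
def FracDerivAt (T : Set ℝ) (f : ℝ → ℝ) (α t L : ℝ) : Prop :=
  (IsOddRecip α →
    ∀ ε > (0:ℝ), ∃ δ > (0:ℝ), ∀ s ∈ T, |t - s| < δ →
      |(f (tsSigma T t) - f s) - L * fpow α (tsSigma T t - s)|
        ≤ ε * |tsSigma T t - s| ^ α) ∧
  (¬ IsOddRecip α →
    ∀ ε > (0:ℝ), ∃ δ > (0:ℝ), ∀ s ∈ T, t - δ < s → s < t →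
      |(f (tsSigma T t) - f s) - L * fpow α (tsSigma T t - s)|
        ≤ ε * |tsSigma T t - s| ^ α)

/-- Continuity at `t` of `f` as a function on the time scale `T`. -/
def ContinuousAtTS (T : Set ℝ) (f : ℝ → ℝ) (t : ℝ) : Prop :=
  ∀ ε > (0:ℝ), ∃ δ > (0:ℝ), ∀ s ∈ T, |t - s| < δ → |f t - f s| ≤ ε

/-!
At a right-dense point `σ t = t`, so the defining estimate of the fractional derivative, taken
with `ε = 1`, is the Hölder bound `|f t - f s| ≤ (1 + |L|) |t - s| ^ α` for `s` near `t`; as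
`α > 0`, the right-hand side tends to `0`.
-/

lemma abs_fpow_le (α x : ℝ) : |fpow α x| ≤ |x| ^ α := by
  have hsign : |Real.sign x| ≤ 1 := by
    rcases Real.sign_apply_eq x with h | h | h <;> simp [h]
  have hpow : 0 ≤ |x| ^ α := Real.rpow_nonneg (abs_nonneg x) α
  rw [fpow, abs_mul, abs_of_nonneg hpow]
  exact mul_le_of_le_one_left hpow hsign

lemma FracDerivAt.abs_sub_le_rpow {T : Set ℝ} {f : ℝ → ℝ} {α t L : ℝ}
    (hL : FracDerivAt T f α t L) (hq : IsOddRecip α) :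
    ∃ δ > 0, ∀ s ∈ T, |t - s| < δ →
      |f (tsSigma T t) - f s| ≤ (1 + |L|) * |tsSigma T t - s| ^ α := by
  obtain ⟨δ, hδ, h⟩ := hL.1 hq 1 one_pos
  refine ⟨δ, hδ, fun s hs hts => ?_⟩
  set d := tsSigma T t - s
  calc |f (tsSigma T t) - f s|
      ≤ |(f (tsSigma T t) - f s) - L * fpow α d| + |L * fpow α d| := by
        simpa using abs_add_le ((f (tsSigma T t) - f s) - L * fpow α d) (L * fpow α d)
    _ ≤ 1 * |d| ^ α + |L| * |d| ^ α := by
        gcongr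
        · exact h s hs hts
        · rw [abs_mul]
          exact mul_le_mul_of_nonneg_left (abs_fpow_le α d) (abs_nonneg L)
    _ = (1 + |L|) * |d| ^ α := by ring

lemma continuousAtTS_of_abs_sub_le_rpow {T : Set ℝ} {f : ℝ → ℝ} {t α C δ : ℝ}
    (hα : 0 < α) (hδ : 0 < δ)
    (h : ∀ s ∈ T, |t - s| < δ → |f t - f s| ≤ C * |t - s| ^ α) :
    ContinuousAtTS T f t := by
  have hg : ContinuousAt (fun x : ℝ => C * |x| ^ α) 0 :=
    continuousAt_const.mul ((Real.continuousAt_rpow_const _ α (Or.inr hα.le)).comp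
      continuous_abs.continuousAt)
  intro ε hε
  obtain ⟨η, hη, hgη⟩ := Metric.continuousAt_iff.1 hg ε hε
  refine ⟨min δ η, lt_min hδ hη, fun s hs hts => ?_⟩
  have hsmall := hgη (x := t - s) (by simpa using lt_of_lt_of_le hts (min_le_right δ η))
  simp only [abs_zero, Real.zero_rpow hα.ne', mul_zero, Real.dist_eq, sub_zero] at hsmall
  exact (h s hs (lt_of_lt_of_le hts (min_le_left δ η))).trans (le_of_abs_le hsmall.le)

theorem fracDeriv_rightDense_continuous_general
    (T : Set ℝ) (f : ℝ → ℝ) (t : ℝ)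
    (α : ℝ) (hα : α ∈ Set.Ioc (0:ℝ) 1) (hq : IsOddRecip α)
    (hrd : RightDense T t) (L : ℝ) (hL : FracDerivAt T f α t L) :
    ContinuousAtTS T f t := by
  obtain ⟨δ, hδ, hbound⟩ := hL.abs_sub_le_rpow hq
  rw [hrd.2] at hbound
  exact continuousAtTS_of_abs_sub_le_rpow hα.1 hδ hbound

/-- Theorem 5 (i): if `α = 1/q` with `q` odd, `t ∈ T^κ` is right-dense and `f` is
fractional differentiable of order `α` at `t`, then `f` is continuous at `t`. -/
theorem fracDeriv_rightDense_continuous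
    (T : Set ℝ) (hT : T.Nonempty) (hTc : IsClosed T)
    (f : ℝ → ℝ) (t : ℝ) (ht : t ∈ tsKappa T)
    (α : ℝ) (hα : α ∈ Set.Ioc (0:ℝ) 1) (hq : IsOddRecip α)
    (hrd : RightDense T t) (L : ℝ) (hL : FracDerivAt T f α t L) :
    ContinuousAtTS T f t :=
  fracDeriv_rightDense_continuous_general T f t α hα hq hrd L hL
end

section
/- Let 𝕋 be a time scale, f : 𝕋 → ℝ, t ∈ 𝕋^κ, and α ∈ (0,1] not of the form 1/q with q an odd natural number. If t is right-dense and f has a fractional derivative of order α at t, then f is left-continuous at t (i.e., for every ε > 0 there exists δ > 0 such that |f(t) − f(s)| ≤ ε for all s ∈ 𝕋 with t − δ < s ≤ t). -/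
open Real Set Classical

/-- Theorem 5 (ii): if `α` is not of the form `1/q` with `q` odd, `t ∈ T^κ` is
right-dense and `f` is fractional differentiable of order `α` at `t`, then `f`
is left-continuous at `t`. -/
theorem fracDeriv_rightDense_leftContinuous
    (T : Set ℝ) (hT : T.Nonempty) (hTc : IsClosed T)
    (f : ℝ → ℝ) (t : ℝ) (ht : t ∈ tsKappa T)
    (α : ℝ) (hα : α ∈ Set.Ioc (0:ℝ) 1) (hq : ¬ IsOddRecip α)
    (hrd : RightDense T t) (L : ℝ) (hL : FracDerivAt T f α t L) :
    ∀ ε > (0:ℝ), ∃ δ > (0:ℝ), ∀ s ∈ T, t - δ < s → s ≤ t → |f t - f s| ≤ ε := by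
  intro ε hε
  have hαpos : (0:ℝ) < α := hα.1
  obtain ⟨δ₁, hδ₁, h1⟩ := hL.2 hq 1 one_pos
  have hL1 : (0:ℝ) < 1 + |L| := by positivity
  set η : ℝ := (ε / (1 + |L|)) ^ (1/α) with hηdef
  have hηpos : 0 < η := Real.rpow_pos_of_pos (by positivity) _
  refine ⟨min δ₁ η, lt_min hδ₁ hηpos, ?_⟩
  intro s hs hs1 hs2
  rcases eq_or_lt_of_le hs2 with h | h
  · simp [h, hε.le]
  · have hst : t - s < min δ₁ η := by linarith
    have h1' := h1 s hs (by have := min_le_left δ₁ η; linarith) h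
    rw [hrd.2] at h1'
    have hts : 0 < t - s := by linarith
    have hfpow : fpow α (t - s) = (t - s) ^ α := by
      rw [fpow, Real.sign_of_pos hts, abs_of_pos hts, one_mul]
    rw [hfpow, abs_of_pos hts, one_mul] at h1'
    have hpow_pos : (0:ℝ) < (t - s) ^ α := Real.rpow_pos_of_pos hts _
    have hbound : |f t - f s| ≤ (1 + |L|) * (t - s) ^ α := by
      have habs : |f t - f s| ≤ |(f t - f s) - L * (t-s)^α| + |L * (t-s)^α| := by
        calc |f t - f s| = |((f t - f s) - L*(t-s)^α) + L*(t-s)^α| := by ring_nf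
        _ ≤ _ := abs_add_le _ _
      have : |L * (t-s)^α| = |L| * (t-s)^α := by
        rw [abs_mul, abs_of_pos hpow_pos]
      nlinarith [abs_nonneg L]
    have h2 : (t - s) ^ α ≤ η ^ α :=
      Real.rpow_le_rpow hts.le (le_of_lt (lt_of_lt_of_le hst (min_le_right _ _))) hαpos.le
    have h3 : η ^ α = ε / (1 + |L|) := by
      rw [hηdef, ← Real.rpow_mul (by positivity), one_div_mul_cancel (ne_of_gt hαpos), Real.rpow_one]
    rw [h3] at h2
    calc |f t - f s| ≤ (1 + |L|) * (t - s) ^ α := hbound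
      _ ≤ (1 + |L|) * (ε / (1 + |L|)) := by nlinarith
      _ = ε := by field_simp
end

section
/- Let 𝕋 be a time scale, f : 𝕋 → ℝ, t ∈ 𝕋^κ, and α ∈ (0,1]. If f is continuous at t (as a function on 𝕋) and t is right-scattered, then f has a fractional derivative of order α at t, namely (f(σ(t)) − f(t))/(μ(t))^α. -/
open Real Set Classical

/-- Theorem 5 (iii): if `f` is continuous at `t` and `t` is right-scattered, then
`f` is fractional differentiable of order `α` at `t` with derivative
`(f(σ t) - f t)/(μ t)^α`. -/
theorem fracDeriv_rightScattered
    (T : Set ℝ) (hT : T.Nonempty) (hTc : IsClosed T)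
    (f : ℝ → ℝ) (t : ℝ) (ht : t ∈ tsKappa T)
    (α : ℝ) (hα : α ∈ Set.Ioc (0:ℝ) 1)
    (hcont : ContinuousAtTS T f t) (hrs : RightScattered T t) :
    FracDerivAt T f α t ((f (tsSigma T t) - f t) / (tsMu T t) ^ α) := by

  obtain ⟨hα0, hα1⟩ := hα
  set σ := tsSigma T t with hσdef
  set μ := tsMu T t with hμdef
  have hμ : 0 < μ := by
    have : t < σ := hrs
    simp only [hμdef, tsMu, ← hσdef]
    linarith
  have hμα : 0 < μ ^ α := Real.rpow_pos_of_pos hμ α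
  set L := (f σ - f t) / μ ^ α with hL
  have hLμ : L * μ ^ α = f σ - f t := div_mul_cancel₀ _ hμα.ne'
  have hσle : ∀ s ∈ T, t < s → σ ≤ s := by
    intro s hs hts
    have hne : ({x | x ∈ T ∧ t < x}).Nonempty := ⟨s, hs, hts⟩
    rw [hσdef, tsSigma, if_pos hne]
    exact csInf_le ⟨t, fun x hx => hx.2.le⟩ ⟨hs, hts⟩
  have hσt : σ - t = μ := by simp [hμdef, tsMu, ← hσdef]
  have key : ∀ ε > (0:ℝ), ∃ δ > (0:ℝ), ∀ s ∈ T, |t - s| < δ →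
      |(f σ - f s) - L * fpow α (σ - s)| ≤ ε * |σ - s| ^ α := by
    intro ε hε
    obtain ⟨δ₁, hδ₁, h₁⟩ := hcont (ε * μ ^ α / 2) (by positivity)
    have hcr : ContinuousAt (fun x : ℝ => x ^ α) μ :=
      Real.continuousAt_rpow_const μ α (Or.inl hμ.ne')
    have hε'' : 0 < ε * μ ^ α / (2 * (|L| + 1)) := by positivity
    obtain ⟨δ₂, hδ₂, h₂⟩ := Metric.continuousAt_iff.mp hcr _ hε''
    refine ⟨min μ (min δ₁ δ₂), by positivity, ?_⟩
    intro s hs hts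
    have hδμ : |t - s| < μ := lt_of_lt_of_le hts (min_le_left _ _)
    have hsd1 : |t - s| < δ₁ :=
      lt_of_lt_of_le hts (le_trans (min_le_right _ _) (min_le_left _ _))
    have hsd2 : |t - s| < δ₂ :=
      lt_of_lt_of_le hts (le_trans (min_le_right _ _) (min_le_right _ _))
    have hst : s ≤ t := by
      by_contra h
      push_neg at h
      have h1 := hσle s hs h
      have h2 : μ ≤ s - t := by linarith
      have h3 : s - t ≤ |t - s| := by rw [abs_sub_comm]; exact le_abs_self _
      linarith
    have hσs : μ ≤ σ - s := by linarith
    have hσs0 : 0 < σ - s := lt_of_lt_of_le hμ hσs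
    have hfpow : fpow α (σ - s) = (σ - s) ^ α := by
      rw [fpow, Real.sign_of_pos hσs0, abs_of_pos hσs0, one_mul]
    have habs : |σ - s| = σ - s := abs_of_pos hσs0
    have hdist : dist (σ - s) μ < δ₂ := by
      rw [Real.dist_eq]
      have he : σ - s - μ = t - s := by linarith
      rw [he]; exact hsd2
    have h2' := h₂ hdist
    rw [Real.dist_eq] at h2'
    have hcontb := h₁ s hs hsd1
    rw [hfpow, habs]
    have e1 : (f σ - f s) - L * (σ - s) ^ α
        = (f t - f s) + (L * μ ^ α - L * (σ - s) ^ α) := by rw [hLμ]; ring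
    rw [e1]
    have hb2 : |L * μ ^ α - L * (σ - s) ^ α| ≤ ε * μ ^ α / 2 := by
      rw [← mul_sub, abs_mul]
      calc |L| * |μ ^ α - (σ - s) ^ α|
          ≤ (|L| + 1) * (ε * μ ^ α / (2 * (|L| + 1))) := by
            apply mul_le_mul (by linarith [abs_nonneg L]) ?_ (abs_nonneg _) (by positivity)
            rw [abs_sub_comm]; exact h2'.le
        _ = ε * μ ^ α / 2 := by
            have : |L| + 1 ≠ 0 := by positivity
            field_simp
    have hmono : ε * μ ^ α ≤ ε * (σ - s) ^ α :=
      mul_le_mul_of_nonneg_left (Real.rpow_le_rpow hμ.le hσs hα0.le) hε.le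
    calc |(f t - f s) + (L * μ ^ α - L * (σ - s) ^ α)|
        ≤ |f t - f s| + |L * μ ^ α - L * (σ - s) ^ α| := abs_add_le _ _
      _ ≤ ε * μ ^ α / 2 + ε * μ ^ α / 2 := add_le_add hcontb hb2
      _ = ε * μ ^ α := by ring
      _ ≤ ε * (σ - s) ^ α := hmono
  constructor
  · intro _ ε hε; exact key ε hε
  · intro _ ε hε
    obtain ⟨δ, hδ, h⟩ := key ε hε
    exact ⟨δ, hδ, fun s hs h1 h2 => h s hs (by rw [abs_of_pos (by linarith)]; linarith)⟩
end

section
/- Let 𝕋 be a time scale, f : 𝕋 → ℝ, t ∈ 𝕋^κ, α ∈ (0,1] with α = 1/q for some odd natural number q, and suppose t is right-dense. Then a real number L is a fractional derivative of f of order α at t if and only if (f(t) − f(s))/(t − s)^α tends to L as s tends to t within 𝕋 \ {t} (i.e., for every ε > 0 there exists δ > 0 such that |(f(t) − f(s))/(t − s)^α − L| ≤ ε for all s ∈ 𝕋 with 0 < |t − s| < δ). -/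
open Real Set Classical

lemma abs_fpow_aux (α x : ℝ) (hx : x ≠ 0) : |fpow α x| = |x| ^ α := by
  have h1 : |Real.sign x| = 1 := by
    rcases hx.lt_or_gt with h | h
    · rw [Real.sign_of_neg h]; norm_num
    · rw [Real.sign_of_pos h]; norm_num
  rw [fpow, abs_mul, h1, one_mul, abs_of_nonneg (Real.rpow_nonneg (abs_nonneg x) α)]

lemma fpow_ne_zero_aux (α x : ℝ) (hx : x ≠ 0) : fpow α x ≠ 0 := by
  intro h
  have h2 := abs_fpow_aux α x hx
  rw [h, abs_zero] at h2
  have h3 : (0:ℝ) < |x| ^ α := Real.rpow_pos_of_pos (abs_pos.mpr hx) α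
  linarith

/-- Theorem 5 (iv): for `α = 1/q` with `q` odd and `t` right-dense, `L` is a
fractional derivative of `f` of order `α` at `t` iff
`(f t - f s)/(t - s)^α → L` as `s → t` within `T \ {t}`. -/
theorem fracDeriv_rightDense_iff_lim
    (T : Set ℝ) (hT : T.Nonempty) (hTc : IsClosed T)
    (f : ℝ → ℝ) (t : ℝ) (ht : t ∈ tsKappa T)
    (α : ℝ) (hα : α ∈ Set.Ioc (0:ℝ) 1) (hq : IsOddRecip α)
    (hrd : RightDense T t) (L : ℝ) :
    FracDerivAt T f α t L ↔
      ∀ ε > (0:ℝ), ∃ δ > (0:ℝ), ∀ s ∈ T, 0 < |t - s| → |t - s| < δ →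
        |(f t - f s) / fpow α (t - s) - L| ≤ ε := by
  have hσ : tsSigma T t = t := hrd.2
  constructor
  · intro hFD ε hε
    obtain ⟨δ, hδ, h⟩ := hFD.1 hq ε hε
    refine ⟨δ, hδ, fun s hs hpos hlt => ?_⟩
    have hts : t - s ≠ 0 := by
      intro h0; rw [h0, abs_zero] at hpos; exact lt_irrefl 0 hpos
    have hb : fpow α (t - s) ≠ 0 := fpow_ne_zero_aux α _ hts
    have hkey := h s hs hlt
    rw [hσ] at hkey
    have heq : (f t - f s) / fpow α (t - s) - L
        = ((f t - f s) - L * fpow α (t - s)) / fpow α (t - s) := by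
      field_simp
    rw [heq, abs_div, abs_fpow_aux α _ hts,
      div_le_iff₀ (Real.rpow_pos_of_pos (abs_pos.mpr hts) α)]
    linarith [hkey]
  · intro hlim
    constructor
    · intro _ ε hε
      obtain ⟨δ, hδ, h⟩ := hlim ε hε
      refine ⟨δ, hδ, fun s hs hlt => ?_⟩
      rw [hσ]
      by_cases hts : t - s = 0
      · have hst : s = t := by
          have := sub_eq_zero.mp hts; linarith
        rw [hts, hst]
        simp [fpow, Real.zero_rpow (ne_of_gt hα.1)]
      · have hkey := h s hs (abs_pos.mpr hts) hlt
        have hb : fpow α (t - s) ≠ 0 := fpow_ne_zero_aux α _ hts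
        have heq : (f t - f s) / fpow α (t - s) - L
            = ((f t - f s) - L * fpow α (t - s)) / fpow α (t - s) := by
          field_simp
        rw [heq, abs_div, abs_fpow_aux α _ hts,
          div_le_iff₀ (Real.rpow_pos_of_pos (abs_pos.mpr hts) α)] at hkey
        linarith [hkey]
    · intro h; exact absurd hq h
end

section
/- Let 𝕋 be a time scale, f : 𝕋 → ℝ, t ∈ 𝕋^κ, α ∈ (0,1] not of the form 1/q with q an odd natural number, and suppose t is right-dense. Then a real number L is a fractional derivative of f of order α at t if and only if (f(t) − f(s))/(t − s)^α tends to L as s tends to t from the left within 𝕋 (i.e., for every ε > 0 there exists δ > 0 such that |(f(t) − f(s))/(t − s)^α − L| ≤ ε for all s ∈ 𝕋 with t − δ < s < t). -/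
open Real Set Classical

/-- Theorem 5 (v): for `α` not of the form `1/q` with `q` odd and `t` right-dense,
`L` is a fractional derivative of `f` of order `α` at `t` iff
`(f t - f s)/(t - s)^α → L` as `s → t⁻` within `T`. -/
theorem fracDeriv_rightDense_iff_leftLim
    (T : Set ℝ) (hT : T.Nonempty) (hTc : IsClosed T)
    (f : ℝ → ℝ) (t : ℝ) (ht : t ∈ tsKappa T)
    (α : ℝ) (hα : α ∈ Set.Ioc (0:ℝ) 1) (hq : ¬ IsOddRecip α)
    (hrd : RightDense T t) (L : ℝ) :
    FracDerivAt T f α t L ↔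
      ∀ ε > (0:ℝ), ∃ δ > (0:ℝ), ∀ s ∈ T, t - δ < s → s < t →
        |(f t - f s) / (t - s) ^ α - L| ≤ ε := by
  obtain ⟨hex, hσ⟩ := hrd
  have key : ∀ s : ℝ, s < t → ∀ ε : ℝ,
      (|(f (tsSigma T t) - f s) - L * fpow α (tsSigma T t - s)|
        ≤ ε * |tsSigma T t - s| ^ α ↔
       |(f t - f s) / (t - s) ^ α - L| ≤ ε) := by
    intro s hs ε
    have hp : 0 < t - s := by linarith
    have hpa : 0 < (t - s) ^ α := Real.rpow_pos_of_pos hp α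
    rw [hσ]
    have hf : fpow α (t - s) = (t - s) ^ α := by
      simp [fpow, Real.sign_of_pos hp, abs_of_pos hp]
    have heq : (f t - f s) / (t - s) ^ α - L
        = ((f t - f s) - L * (t - s) ^ α) / (t - s) ^ α := by
      field_simp
    rw [hf, abs_of_pos hp, heq, abs_div, abs_of_pos hpa, div_le_iff₀ hpa]
  constructor
  · intro hF ε hε
    obtain ⟨δ, hδ, h⟩ := hF.2 hq ε hε
    exact ⟨δ, hδ, fun s hsT h1 h2 => (key s h2 ε).1 (h s hsT h1 h2)⟩
  · intro h
    refine ⟨fun hodd => absurd hodd hq, fun _ ε hε => ?_⟩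
    obtain ⟨δ, hδ, h⟩ := h ε hε
    exact ⟨δ, hδ, fun s hsT h1 h2 => (key s h2 ε).2 (h s hsT h1 h2)⟩
end

section
/- Let 𝕋 be a time scale, f, g : 𝕋 → ℝ, t ∈ 𝕋^κ, and α ∈ (0,1]. Assume f and g are continuous at t (as functions on 𝕋), L_f is a fractional derivative of f of order α at t, and L_g is a fractional derivative of g of order α at t. Then both L_f·g(t) + f(σ(t))·L_g and L_f·g(σ(t)) + f(t)·L_g are fractional derivatives of the product f·g of order α at t. -/
open Real Set Classical

lemma core_est (ε ε0 R P fσ fs gσ gs gt Lf Lg : ℝ)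
    (hR : 0 ≤ R) (hP : |P| ≤ R)
    (hK : ε0 * (|gt| + |fσ| + |Lf| + 2) ≤ ε) (hε0 : 0 ≤ ε0) (hε01 : ε0 ≤ 1)
    (h1 : |(fσ - fs) - Lf * P| ≤ ε0 * R)
    (h2 : |(gσ - gs) - Lg * P| ≤ ε0 * R)
    (h3 : |gt - gs| ≤ ε0) :
    |(fσ * gσ - fs * gs) - (Lf * gt + fσ * Lg) * P| ≤ ε * R := by
  have hid : (fσ * gσ - fs * gs) - (Lf * gt + fσ * Lg) * P
      = ((fσ - fs) - Lf * P) * gt + fσ * ((gσ - gs) - Lg * P)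
        + (fσ - fs) * (gs - gt) := by ring
  have hC : |fσ - fs| ≤ ε0 * R + |Lf| * R := by
    calc |fσ - fs| = |((fσ - fs) - Lf * P) + Lf * P| := by ring_nf
      _ ≤ |(fσ - fs) - Lf * P| + |Lf * P| := abs_add_le _ _
      _ ≤ ε0 * R + |Lf| * R := by
          rw [abs_mul]
          have := mul_le_mul_of_nonneg_left hP (abs_nonneg Lf)
          linarith
  have h3' : |gs - gt| ≤ ε0 := by rwa [abs_sub_comm]
  rw [hid]
  calc |((fσ - fs) - Lf * P) * gt + fσ * ((gσ - gs) - Lg * P) + (fσ - fs) * (gs - gt)|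
      ≤ |((fσ - fs) - Lf * P) * gt + fσ * ((gσ - gs) - Lg * P)|
        + |(fσ - fs) * (gs - gt)| := abs_add_le _ _
    _ ≤ |((fσ - fs) - Lf * P) * gt| + |fσ * ((gσ - gs) - Lg * P)|
        + |(fσ - fs) * (gs - gt)| := by
          have := abs_add_le (((fσ - fs) - Lf * P) * gt) (fσ * ((gσ - gs) - Lg * P))
          linarith
    _ ≤ ε * R := by
        rw [abs_mul, abs_mul, abs_mul]
        have e1 : |(fσ - fs) - Lf * P| * |gt| ≤ ε0 * R * |gt| :=
          mul_le_mul_of_nonneg_right h1 (abs_nonneg gt)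
        have e2 : |fσ| * |(gσ - gs) - Lg * P| ≤ |fσ| * (ε0 * R) :=
          mul_le_mul_of_nonneg_left h2 (abs_nonneg fσ)
        have e3 : |fσ - fs| * |gs - gt| ≤ (ε0 * R + |Lf| * R) * ε0 :=
          mul_le_mul hC h3' (abs_nonneg _) (by positivity)
        nlinarith [abs_nonneg gt, abs_nonneg fσ, abs_nonneg Lf,
          mul_le_mul_of_nonneg_right hK hR, mul_nonneg hε0 hR,
          mul_nonneg (mul_nonneg hε0 hR) (sub_nonneg.mpr hε01)]

lemma fracDeriv_mul_aux (T : Set ℝ) (f g : ℝ → ℝ) (t : ℝ)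
    (α : ℝ) (hα : α ∈ Set.Ioc (0:ℝ) 1) (Lf Lg : ℝ)
    (hgc : ContinuousAtTS T g t)
    (hf : FracDerivAt T f α t Lf) (hg : FracDerivAt T g α t Lg) :
    FracDerivAt T (fun s => f s * g s) α t (Lf * g t + f (tsSigma T t) * Lg) := by
  set σ := tsSigma T t with hσ
  have setup : ∀ ε > (0:ℝ), ∃ ε0 > (0:ℝ),
      ε0 * (|g t| + |f σ| + |Lf| + 2) ≤ ε ∧ ε0 ≤ 1 := by
    intro ε hε
    set K := |g t| + |f σ| + |Lf| + 2 with hK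
    have hKpos : 0 < K := by positivity
    refine ⟨min 1 (ε / K), lt_min one_pos (div_pos hε hKpos), ?_, min_le_left _ _⟩
    calc min 1 (ε / K) * K ≤ (ε / K) * K :=
          mul_le_mul_of_nonneg_right (min_le_right _ _) hKpos.le
      _ = ε := div_mul_cancel₀ ε hKpos.ne'
  constructor
  · intro hodd ε hε
    obtain ⟨ε0, hε0, hKK, hε01⟩ := setup ε hε
    obtain ⟨δ1, hδ1, H1⟩ := hf.1 hodd ε0 hε0
    obtain ⟨δ2, hδ2, H2⟩ := hg.1 hodd ε0 hε0
    obtain ⟨δ3, hδ3, H3⟩ := hgc ε0 hε0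
    refine ⟨min δ1 (min δ2 δ3), lt_min hδ1 (lt_min hδ2 hδ3), ?_⟩
    intro s hs hst
    exact core_est ε ε0 (|σ - s| ^ α) (fpow α (σ - s)) (f σ) (f s) (g σ) (g s)
      (g t) Lf Lg (Real.rpow_nonneg (abs_nonneg _) α) (abs_fpow_le α _) hKK hε0.le hε01
      (H1 s hs (lt_of_lt_of_le hst (min_le_left _ _)))
      (H2 s hs (lt_of_lt_of_le hst (le_trans (min_le_right _ _) (min_le_left _ _))))
      (H3 s hs (lt_of_lt_of_le hst (le_trans (min_le_right _ _) (min_le_right _ _))))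
  · intro hodd ε hε
    obtain ⟨ε0, hε0, hKK, hε01⟩ := setup ε hε
    obtain ⟨δ1, hδ1, H1⟩ := hf.2 hodd ε0 hε0
    obtain ⟨δ2, hδ2, H2⟩ := hg.2 hodd ε0 hε0
    obtain ⟨δ3, hδ3, H3⟩ := hgc ε0 hε0
    refine ⟨min δ1 (min δ2 δ3), lt_min hδ1 (lt_min hδ2 hδ3), ?_⟩
    intro s hs hs1 hs2
    have hd2 : t - δ2 < s := by
      have : min δ1 (min δ2 δ3) ≤ δ2 := le_trans (min_le_right _ _) (min_le_left _ _)
      linarith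
    have hd1 : t - δ1 < s := by
      have : min δ1 (min δ2 δ3) ≤ δ1 := min_le_left _ _
      linarith
    have hd3 : |t - s| < δ3 := by
      have : min δ1 (min δ2 δ3) ≤ δ3 := le_trans (min_le_right _ _) (min_le_right _ _)
      rw [abs_lt]; constructor <;> linarith
    exact core_est ε ε0 (|σ - s| ^ α) (fpow α (σ - s)) (f σ) (f s) (g σ) (g s)
      (g t) Lf Lg (Real.rpow_nonneg (abs_nonneg _) α) (abs_fpow_le α _) hKK hε0.le hε01
      (H1 s hs hd1 hs2) (H2 s hs hd2 hs2) (H3 s hs hd3)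

/-- Product rule: for `f`, `g` continuous at `t` with fractional derivatives `L_f`,
`L_g` of order `α` at `t`, both `L_f·g(t) + f(σ t)·L_g` and `L_f·g(σ t) + f(t)·L_g`
are fractional derivatives of `f·g` of order `α` at `t`. -/
theorem fracDeriv_mul
    (T : Set ℝ) (hT : T.Nonempty) (hTc : IsClosed T)
    (f g : ℝ → ℝ) (t : ℝ) (ht : t ∈ tsKappa T)
    (α : ℝ) (hα : α ∈ Set.Ioc (0:ℝ) 1) (Lf Lg : ℝ)
    (hfc : ContinuousAtTS T f t) (hgc : ContinuousAtTS T g t)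
    (hf : FracDerivAt T f α t Lf) (hg : FracDerivAt T g α t Lg) :
    FracDerivAt T (fun s => f s * g s) α t (Lf * g t + f (tsSigma T t) * Lg) ∧
    FracDerivAt T (fun s => f s * g s) α t (Lf * g (tsSigma T t) + f t * Lg) := by
  constructor
  · exact fracDeriv_mul_aux T f g t α hα Lf Lg hgc hf hg
  · have h2 := fracDeriv_mul_aux T g f t α hα Lg Lf hfc hg hf
    have hfun : (fun s => f s * g s) = (fun s => g s * f s) := by
      funext s; ring
    rw [hfun, show Lf * g (tsSigma T t) + f t * Lg
        = Lg * f t + g (tsSigma T t) * Lf from by ring]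
    exact h2
end

section
/- Let 𝕋 be a time scale, f : 𝕋 → ℝ, t ∈ 𝕋^κ, and α ∈ (0,1]. Assume f is continuous at t (as a function on 𝕋), f(t)·f(σ(t)) ≠ 0, f(s) ≠ 0 for all s ∈ 𝕋, and L is a fractional derivative of f of order α at t. Then −L/(f(t)·f(σ(t))) is a fractional derivative of the function 1/f of order α at t. -/
open Real Set Classical

lemma abs_fpow (α x : ℝ) (hα : α ≠ 0) : |fpow α x| = |x| ^ α := by
  unfold fpow
  rcases lt_trichotomy x 0 with h | h | h
  · rw [Real.sign_of_neg h, abs_mul]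
    simp [abs_of_nonneg (Real.rpow_nonneg (abs_nonneg x) α)]
  · simp [h, Real.zero_rpow hα]
  · rw [Real.sign_of_pos h, abs_mul]
    simp [abs_of_nonneg (Real.rpow_nonneg (abs_nonneg x) α)]

lemma key (a b c L p P ε : ℝ) (hε : 0 < ε) (ha : a ≠ 0) (hc : c ≠ 0)
    (hb : |c| / 2 ≤ |b|) (hP : 0 ≤ P) (hpP : |p| = P)
    (h1 : |(a - b) - L * p| ≤ (ε / 2 * (|a| * (|c| / 2))) * P)
    (h2 : |c - b| ≤ ε * |a| * |c| * |c| / (4 * (|L| + 1))) :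
    |(1 / a - 1 / b) - (-(L / (c * a))) * p| ≤ ε * P := by
  have hA : (0:ℝ) < |a| := abs_pos.2 ha
  have hC : (0:ℝ) < |c| := abs_pos.2 hc
  have hB : (0:ℝ) < |b| := lt_of_lt_of_le (by linarith) hb
  have hb0 : b ≠ 0 := abs_pos.1 hB
  have hid : (1 / a - 1 / b) - (-(L / (c * a))) * p
      = -(((a - b) - L * p) / (a * b)) + (L * p * (b - c)) / (a * b * c) := by
    field_simp
    ring
  rw [hid]
  have habs := abs_add_le (-(((a - b) - L * p) / (a * b))) ((L * p * (b - c)) / (a * b * c))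
  have hX : |(-(((a - b) - L * p) / (a * b)))| ≤ ε / 2 * P := by
    rw [abs_neg, abs_div, abs_mul, div_le_iff₀ (by positivity)]
    nlinarith [mul_le_mul_of_nonneg_left hb (by positivity : (0:ℝ) ≤ ε / 2 * P * |a|)]
  have hY : |(L * p * (b - c)) / (a * b * c)| ≤ ε / 2 * P := by
    rw [abs_div, abs_mul, abs_mul, abs_mul, abs_mul, hpP, div_le_iff₀ (by positivity)]
    have h2' : 4 * ((|L| + 1) * |c - b|) ≤ ε * |a| * |c| * |c| := by
      rw [le_div_iff₀ (by positivity)] at h2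
      linarith [h2]
    have hbc : |b - c| = |c - b| := abs_sub_comm b c
    rw [hbc]
    have hL1 : |L| ≤ |L| + 1 := by linarith
    nlinarith [mul_le_mul_of_nonneg_left h2' hP,
      mul_le_mul_of_nonneg_right hL1 (mul_nonneg hP (abs_nonneg (c - b))),
      mul_le_mul_of_nonneg_left hb (by positivity : (0:ℝ) ≤ ε / 2 * P * |a| * |c|),
      abs_nonneg (c - b), mul_nonneg hP (abs_nonneg (c - b))]
  linarith

/-- Reciprocal rule: if `f` is continuous at `t`, `f(t)·f(σ t) ≠ 0`, `f` is nowhere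
zero on `T`, and `L` is a fractional derivative of `f` of order `α` at `t`, then
`-L/(f(t)·f(σ t))` is a fractional derivative of `1/f` of order `α` at `t`. -/
theorem fracDeriv_inv
    (T : Set ℝ) (hT : T.Nonempty) (hTc : IsClosed T)
    (f : ℝ → ℝ) (t : ℝ) (ht : t ∈ tsKappa T)
    (α : ℝ) (hα : α ∈ Set.Ioc (0:ℝ) 1) (L : ℝ)
    (hfc : ContinuousAtTS T f t)
    (hne : f t * f (tsSigma T t) ≠ 0)
    (hnz : ∀ s ∈ T, f s ≠ 0)
    (hf : FracDerivAt T f α t L) :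
    FracDerivAt T (fun s => 1 / f s) α t (-(L / (f t * f (tsSigma T t)))) := by
  set σ := tsSigma T t with hσ
  have hft : f t ≠ 0 := fun h => hne (by rw [h, zero_mul])
  have hfσ : f σ ≠ 0 := fun h => hne (by rw [h, mul_zero])
  have hα0 : α ≠ 0 := ne_of_gt hα.1
  constructor
  · intro hodd ε hε
    obtain ⟨δ₁, hδ₁, H1⟩ := hf.1 hodd (ε / 2 * (|f σ| * (|f t| / 2)))
      (by positivity)
    obtain ⟨δ₂, hδ₂, H2⟩ := hfc (|f t| / 2) (by positivity)
    obtain ⟨δ₃, hδ₃, H3⟩ := hfc (ε * |f σ| * |f t| * |f t| / (4 * (|L| + 1)))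
      (by positivity)
    refine ⟨min δ₁ (min δ₂ δ₃), by positivity, fun s hs hd => ?_⟩
    have hd1 : |t - s| < δ₁ := lt_of_lt_of_le hd (min_le_left _ _)
    have hd2 : |t - s| < δ₂ :=
      lt_of_lt_of_le hd (le_trans (min_le_right _ _) (min_le_left _ _))
    have hd3 : |t - s| < δ₃ :=
      lt_of_lt_of_le hd (le_trans (min_le_right _ _) (min_le_right _ _))
    have hbnd : |f t| / 2 ≤ |f s| := by
      have h := abs_sub_abs_le_abs_sub (f t) (f s)
      have := H2 s hs hd2
      linarith
    simpa using key (f σ) (f s) (f t) L (fpow α (σ - s)) (|σ - s| ^ α) ε hε hfσ hft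
      hbnd (Real.rpow_nonneg (abs_nonneg _) α) (abs_fpow α (σ - s) hα0)
      (H1 s hs hd1) (H3 s hs hd3)
  · intro hodd ε hε
    obtain ⟨δ₁, hδ₁, H1⟩ := hf.2 hodd (ε / 2 * (|f σ| * (|f t| / 2)))
      (by positivity)
    obtain ⟨δ₂, hδ₂, H2⟩ := hfc (|f t| / 2) (by positivity)
    obtain ⟨δ₃, hδ₃, H3⟩ := hfc (ε * |f σ| * |f t| * |f t| / (4 * (|L| + 1)))
      (by positivity)
    refine ⟨min δ₁ (min δ₂ δ₃), by positivity, fun s hs hl hr => ?_⟩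
    have hl1 : t - δ₁ < s := by
      have : min δ₁ (min δ₂ δ₃) ≤ δ₁ := min_le_left _ _
      linarith
    have habs : |t - s| < min δ₂ δ₃ := by
      rw [abs_lt]
      have : min δ₁ (min δ₂ δ₃) ≤ min δ₂ δ₃ := min_le_right _ _
      constructor <;> linarith
    have hd2 : |t - s| < δ₂ := lt_of_lt_of_le habs (min_le_left _ _)
    have hd3 : |t - s| < δ₃ := lt_of_lt_of_le habs (min_le_right _ _)
    have hbnd : |f t| / 2 ≤ |f s| := by
      have h := abs_sub_abs_le_abs_sub (f t) (f s)
      have := H2 s hs hd2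
      linarith
    simpa using key (f σ) (f s) (f t) L (fpow α (σ - s)) (|σ - s| ^ α) ε hε hfσ hft
      hbnd (Real.rpow_nonneg (abs_nonneg _) α) (abs_fpow α (σ - s) hα0)
      (H1 s hs hl1 hr) (H3 s hs hd3)
end

section
/- Let 𝕋 be a time scale, c ∈ ℝ, m a positive natural number, and α ∈ (0,1). Define f : 𝕋 → ℝ by f(t) = (t − c)^m. Then for every t ∈ 𝕋^κ, the number (μ(t))^{1−α} · Σ_{ν=0}^{m−1} (σ(t) − c)^ν (t − c)^{m−1−ν} is a fractional derivative of f of order α at t. -/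
open Real Set Classical

lemma le_tsSigma (T : Set ℝ) (t : ℝ) : t ≤ tsSigma T t := by
  unfold tsSigma
  split_ifs with h
  · exact le_csInf h fun s hs => hs.2.le
  · exact le_rfl

/-- Fractional derivative of `f(t) = (t - c)^m` on a time scale:
`f^(α)(t) = (μ t)^(1-α) · Σ_{ν=0}^{m-1} (σ t - c)^ν (t - c)^(m-1-ν)`. -/
theorem fracDeriv_pow
    (T : Set ℝ) (hT : T.Nonempty) (hTc : IsClosed T)
    (c : ℝ) (m : ℕ) (hm : 0 < m) (α : ℝ) (hα : α ∈ Set.Ioo (0:ℝ) 1)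
    (t : ℝ) (ht : t ∈ tsKappa T) :
    FracDerivAt T (fun s => (s - c) ^ m) α t
      ((tsMu T t) ^ (1 - α) *
        ∑ ν ∈ Finset.range m, (tsSigma T t - c) ^ ν * (t - c) ^ (m - 1 - ν)) := by
  obtain ⟨hα0, hα1⟩ := hα
  have h1α : (0:ℝ) < 1 - α := by linarith
  set σ := tsSigma T t with hσdef
  set L : ℝ := (tsMu T t) ^ (1 - α) *
      ∑ ν ∈ Finset.range m, (σ - c) ^ ν * (t - c) ^ (m - 1 - ν) with hLdef
  have hts : t ≤ σ := le_tsSigma T t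
  suffices H : ∀ ε > (0:ℝ), ∃ δ > (0:ℝ), ∀ s ∈ T, |t - s| < δ →
      |((σ - c) ^ m - (s - c) ^ m) - L * fpow α (σ - s)| ≤ ε * |σ - s| ^ α by
    constructor
    · intro _ ε hε
      obtain ⟨δ, hδ, hH⟩ := H ε hε
      exact ⟨δ, hδ, fun s hs hd => hH s hs hd⟩
    · intro _ ε hε
      obtain ⟨δ, hδ, hH⟩ := H ε hε
      refine ⟨δ, hδ, fun s hs h1 h2 => hH s hs ?_⟩
      rw [abs_of_pos (by linarith)]; linarith
  intro ε hε
  rcases eq_or_lt_of_le hts with heq | hlt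
  · -- right-dense (or max) case : σ = t, L = 0
    have hμ : tsMu T t = 0 := by
      simp only [tsMu, ← hσdef, ← heq, sub_self]
    have hL0 : L = 0 := by
      rw [hLdef, hμ, Real.zero_rpow (by linarith), zero_mul]
    set C : ℝ := (m : ℝ) * (|t - c| + 1) ^ (m - 1) + 1 with hC
    have hCpos : (0:ℝ) < C := by positivity
    refine ⟨min 1 ((ε / C) ^ (1 / (1 - α))), lt_min one_pos
      (Real.rpow_pos_of_pos (by positivity) _), fun s hs hd => ?_⟩
    rw [hL0, zero_mul, sub_zero, ← heq]
    have hd1 : |t - s| < 1 := lt_of_lt_of_le hd (min_le_left _ _)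
    have hd2 : |t - s| ≤ (ε / C) ^ (1 / (1 - α)) :=
      le_of_lt (lt_of_lt_of_le hd (min_le_right _ _))
    have hid : (t - c) ^ m - (s - c) ^ m =
        (∑ i ∈ Finset.range m, (t - c) ^ i * (s - c) ^ (m - 1 - i)) * (t - s) := by
      have h1 := geom_sum₂_mul (t - c) (s - c) m
      rw [show t - c - (s - c) = t - s by ring] at h1
      exact h1.symm
    have hsum : |∑ i ∈ Finset.range m, (t - c) ^ i * (s - c) ^ (m - 1 - i)| ≤ C := by
      calc |∑ i ∈ Finset.range m, (t - c) ^ i * (s - c) ^ (m - 1 - i)|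
          ≤ ∑ i ∈ Finset.range m, |(t - c) ^ i * (s - c) ^ (m - 1 - i)| :=
            Finset.abs_sum_le_sum_abs _ _
        _ ≤ ∑ i ∈ Finset.range m, (|t - c| + 1) ^ (m - 1) := by
            apply Finset.sum_le_sum
            intro i hi
            have him : i < m := Finset.mem_range.mp hi
            have h2 : |s - c| ≤ |t - c| + 1 := by
              have h3 : |s - c| ≤ |s - t| + |t - c| := abs_sub_le s t c
              have h4 : |s - t| < 1 := by rwa [abs_sub_comm]
              linarith
            rw [abs_mul, abs_pow, abs_pow]
            calc |t - c| ^ i * |s - c| ^ (m - 1 - i)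
                ≤ (|t - c| + 1) ^ i * (|t - c| + 1) ^ (m - 1 - i) := by
                  have h5 : (0:ℝ) ≤ |t - c| := abs_nonneg _
                  gcongr <;> linarith
              _ = (|t - c| + 1) ^ (i + (m - 1 - i)) := (pow_add _ _ _).symm
              _ = (|t - c| + 1) ^ (m - 1) := by congr 1; omega
        _ = (m : ℝ) * (|t - c| + 1) ^ (m - 1) := by
            rw [Finset.sum_const, Finset.card_range, nsmul_eq_mul]
        _ ≤ C := by rw [hC]; linarith
    rcases eq_or_ne s t with rfl | hst
    · simp [Real.rpow_natCast]
      positivity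
    · have habs : (0:ℝ) < |t - s| := by
        rw [abs_pos]
        intro h; exact hst (sub_eq_zero.mp h).symm
      have hle : |t - s| ^ (1 - α) ≤ ε / C := by
        calc |t - s| ^ (1 - α) ≤ ((ε / C) ^ (1 / (1 - α))) ^ (1 - α) :=
              Real.rpow_le_rpow (abs_nonneg _) hd2 h1α.le
          _ = (ε / C) ^ ((1 / (1 - α)) * (1 - α)) := by
              rw [← Real.rpow_mul (by positivity)]
          _ = ε / C := by
              rw [one_div_mul_cancel (by linarith), Real.rpow_one]
      have hpow : |t - s| = |t - s| ^ α * |t - s| ^ (1 - α) := by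
        rw [← Real.rpow_add habs, show α + (1 - α) = 1 by ring, Real.rpow_one]
      calc |(t - c) ^ m - (s - c) ^ m|
          = |∑ i ∈ Finset.range m, (t - c) ^ i * (s - c) ^ (m - 1 - i)| * |t - s| := by
            rw [hid, abs_mul]
        _ ≤ C * |t - s| := mul_le_mul_of_nonneg_right hsum (abs_nonneg _)
        _ = C * (|t - s| ^ α * |t - s| ^ (1 - α)) := by rw [← hpow]
        _ ≤ C * (|t - s| ^ α * (ε / C)) := by gcongr
        _ = ε * |t - s| ^ α := by field_simp

  · -- right-scattered case : t < σ
    have hμ : tsMu T t = σ - t := rfl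
    have hμpos : (0:ℝ) < σ - t := sub_pos.mpr hlt
    have hkey : (σ - c) ^ m - (t - c) ^ m = L * (σ - t) ^ α := by
      have h1 := geom_sum₂_mul (σ - c) (t - c) m
      rw [show σ - c - (t - c) = σ - t by ring] at h1
      have h2 : (σ - t) ^ (1 - α) * (σ - t) ^ α = σ - t := by
        rw [← Real.rpow_add hμpos, show 1 - α + α = 1 by ring, Real.rpow_one]
      rw [hLdef, hμ, mul_assoc, mul_comm (∑ ν ∈ Finset.range m,
        (σ - c) ^ ν * (t - c) ^ (m - 1 - ν)) ((σ - t) ^ α), ← mul_assoc, h2,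
        mul_comm, h1]
    have hg : ContinuousAt
        (fun s => ((σ - c) ^ m - (s - c) ^ m) - L * (σ - s) ^ α) t := by
      apply ContinuousAt.sub
      · fun_prop
      · apply ContinuousAt.mul continuousAt_const
        have h1 : ContinuousAt (fun x : ℝ => x ^ α) (σ - t) :=
          Real.continuousAt_rpow_const _ _ (Or.inr hα0.le)
        exact h1.comp (by fun_prop)
    have hε' : (0:ℝ) < ε * ((σ - t) / 2) ^ α :=
      mul_pos hε (Real.rpow_pos_of_pos (by linarith) _)
    obtain ⟨δ', hδ', hcont⟩ := Metric.continuousAt_iff.mp hg _ hε'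
    refine ⟨min δ' ((σ - t) / 2), lt_min hδ' (by linarith), fun s hs hd => ?_⟩
    have hd1 : |t - s| < δ' := lt_of_lt_of_le hd (min_le_left _ _)
    have hd2 : |t - s| < (σ - t) / 2 := lt_of_lt_of_le hd (min_le_right _ _)
    obtain ⟨hd3, hd4⟩ := abs_lt.mp hd2
    have hσs : (σ - t) / 2 < σ - s := by linarith
    have hσs0 : (0:ℝ) < σ - s := by linarith
    have hfp : fpow α (σ - s) = (σ - s) ^ α := by
      rw [fpow, Real.sign_of_pos hσs0, abs_of_pos hσs0, one_mul]
    have h0 : ((σ - c) ^ m - (t - c) ^ m) - L * (σ - t) ^ α = 0 := by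
      rw [hkey]; ring
    have hb := hcont (x := s) (by rw [Real.dist_eq, abs_sub_comm]; exact hd1)
    rw [Real.dist_eq, h0, sub_zero] at hb
    rw [hfp]
    calc |((σ - c) ^ m - (s - c) ^ m) - L * (σ - s) ^ α|
        ≤ ε * ((σ - t) / 2) ^ α := hb.le
      _ ≤ ε * |σ - s| ^ α := by
          apply mul_le_mul_of_nonneg_left _ hε.le
          apply Real.rpow_le_rpow (by linarith) _ hα0.le
          rw [abs_of_pos hσs0]; linarith
end

section
/- Let 𝕋 be a time scale, c ∈ ℝ with c ∉ 𝕋, m a positive natural number, and α ∈ (0,1). Define g : 𝕋 → ℝ by g(t) = 1/(t − c)^m. Then for every t ∈ 𝕋^κ with (t − c)·(σ(t) − c) ≠ 0, the number −(μ(t))^{1−α} · Σ_{ν=0}^{m−1} 1/((σ(t) − c)^{m−ν} (t − c)^{ν+1}) is a fractional derivative of g of order α at t. -/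
open Real Set Classical

/-
Write `σ = σ(t)`. Summing a geometric progression gives `g(σ) - g(s) = (σ - s) D(s)` for
`s ∈ 𝕋`, with `D(s) = -Σ_ν 1/((σ - c)^(m-ν) (s - c)^(ν+1))` continuous at `t`. For the signed
power, `x = x^α |x|^(1-α)`, so the error `g(σ) - g(s) - μ(t)^(1-α) D(t) (σ - s)^α` equals
`(σ - s)^α (G(s) - G(t))` with `G(s) = |σ - s|^(1-α) D(s)`, and `G` is continuous at `t`
because `1 - α ≥ 0`. This handles right-dense and right-scattered points alike, and the
estimate is two-sided, so it covers both clauses of the definition.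
-/

lemma one_div_pow_sub_one_div_pow {a b : ℝ} (ha : a ≠ 0) (hb : b ≠ 0) (m : ℕ) :
    1 / a ^ m - 1 / b ^ m = (a - b) * -∑ ν ∈ Finset.range m, 1 / (a ^ (m - ν) * b ^ (ν + 1)) := by
  have hterm : ∀ ν ∈ Finset.range m, 1 / (a ^ (m - ν) * b ^ (ν + 1))
      = b⁻¹ ^ ν * a⁻¹ ^ (m - 1 - ν) * (a⁻¹ * b⁻¹) := by
    intro ν hν
    rw [show m - ν = m - 1 - ν + 1 by have := Finset.mem_range.mp hν; omega]
    simp only [one_div, mul_inv, inv_pow, pow_succ]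
    ring
  have hinv : (a - b) * (a⁻¹ * b⁻¹) = b⁻¹ - a⁻¹ := by field_simp
  rw [Finset.sum_congr rfl hterm, ← Finset.sum_mul, mul_neg, mul_left_comm, hinv,
    geom_sum₂_mul, inv_pow, inv_pow, one_div, one_div, neg_sub]

lemma fpow_mul_abs_rpow_one_sub (α x : ℝ) : fpow α x * |x| ^ (1 - α) = x := by
  rcases lt_trichotomy x 0 with hx | rfl | hx
  · rw [fpow, mul_assoc, ← rpow_add (abs_pos.mpr hx.ne), add_sub_cancel, rpow_one,
      sign_of_neg hx, abs_of_neg hx, neg_one_mul, neg_neg]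
  · simp [fpow]
  · rw [fpow, mul_assoc, ← rpow_add (abs_pos.mpr hx.ne'), add_sub_cancel, rpow_one,
      sign_of_pos hx, abs_of_pos hx, one_mul]

lemma fracDerivAt_of_two_sided {T : Set ℝ} {f : ℝ → ℝ} {α t L : ℝ}
    (h : ∀ ε > (0:ℝ), ∃ δ > (0:ℝ), ∀ s ∈ T, |t - s| < δ →
      |(f (tsSigma T t) - f s) - L * fpow α (tsSigma T t - s)| ≤ ε * |tsSigma T t - s| ^ α) :
    FracDerivAt T f α t L := by
  refine ⟨fun _ => h, fun _ ε hε => ?_⟩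
  obtain ⟨δ, hδ, hδs⟩ := h ε hε
  exact ⟨δ, hδ, fun s hs hδt hst => hδs s hs (abs_lt.mpr ⟨by linarith, by linarith⟩)⟩

lemma fracDerivAt_of_sub_eq_mul {T : Set ℝ} {f D : ℝ → ℝ} {α t : ℝ} (hα : α ≤ 1)
    (hfD : ∀ s ∈ T, f (tsSigma T t) - f s = (tsSigma T t - s) * D s)
    (hD : ContinuousAt D t) :
    FracDerivAt T f α t (|tsSigma T t - t| ^ (1 - α) * D t) := by
  set σ := tsSigma T t
  set G : ℝ → ℝ := fun s => |σ - s| ^ (1 - α) * D s with hGdef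
  have hG : ContinuousAt G t :=
    ((continuousAt_const.sub continuousAt_id).abs.rpow_const (Or.inr (sub_nonneg.2 hα))).mul hD
  refine fracDerivAt_of_two_sided fun ε hε => ?_
  obtain ⟨δ, hδ, hball⟩ := Metric.continuousAt_iff.mp hG ε hε
  refine ⟨δ, hδ, fun s hs hts => ?_⟩
  have hdiff : f σ - f s - G t * fpow α (σ - s) = fpow α (σ - s) * (G s - G t) := by
    rw [hfD s hs, hGdef]
    nth_rewrite 1 [← fpow_mul_abs_rpow_one_sub α (σ - s)]
    ring
  calc |f σ - f s - G t * fpow α (σ - s)| = |fpow α (σ - s)| * |G s - G t| := by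
        rw [hdiff, abs_mul]
    _ ≤ |σ - s| ^ α * ε := by
        refine mul_le_mul (abs_fpow_le α _) (hball ?_).le (abs_nonneg _) (by positivity)
        rwa [Real.dist_eq, abs_sub_comm]
    _ = ε * |σ - s| ^ α := mul_comm _ _

theorem fracDeriv_inv_pow_general
    (T : Set ℝ)
    (c : ℝ) (hc : c ∉ T) (m : ℕ) (α : ℝ) (hα : α ∈ Set.Ioo (0:ℝ) 1)
    (t : ℝ)
    (hne : (t - c) * (tsSigma T t - c) ≠ 0) :
    FracDerivAt T (fun s => 1 / (s - c) ^ m) α t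
      (-((tsMu T t) ^ (1 - α) *
        ∑ ν ∈ Finset.range m,
          1 / ((tsSigma T t - c) ^ (m - ν) * (t - c) ^ (ν + 1)))) := by
  obtain ⟨htc, hσc⟩ := mul_ne_zero_iff.mp hne
  have hμ : tsMu T t = |tsSigma T t - t| :=
    (abs_of_nonneg (sub_nonneg.2 (le_tsSigma T t))).symm
  have hD : ContinuousAt (fun s => -∑ ν ∈ Finset.range m,
      1 / ((tsSigma T t - c) ^ (m - ν) * (s - c) ^ (ν + 1))) t := by
    fun_prop (disch := exact mul_ne_zero (pow_ne_zero _ hσc) (pow_ne_zero _ htc))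
  convert fracDerivAt_of_sub_eq_mul hα.2.le (fun s hs => ?_) hD using 1
  · rw [hμ, mul_neg]
  · rw [one_div_pow_sub_one_div_pow hσc (sub_ne_zero.mpr (ne_of_mem_of_not_mem hs hc)),
      sub_sub_sub_cancel_right]

/-- Fractional derivative of `g(t) = 1/(t - c)^m` on a time scale, provided
`(t - c)(σ t - c) ≠ 0`:
`g^(α)(t) = -(μ t)^(1-α) · Σ_{ν=0}^{m-1} 1/((σ t - c)^(m-ν) (t - c)^(ν+1))`. -/
theorem fracDeriv_inv_pow
    (T : Set ℝ) (hT : T.Nonempty) (hTc : IsClosed T)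
    (c : ℝ) (hc : c ∉ T) (m : ℕ) (hm : 0 < m) (α : ℝ) (hα : α ∈ Set.Ioo (0:ℝ) 1)
    (t : ℝ) (ht : t ∈ tsKappa T)
    (hne : (t - c) * (tsSigma T t - c) ≠ 0) :
    FracDerivAt T (fun s => 1 / (s - c) ^ m) α t
      (-((tsMu T t) ^ (1 - α) *
        ∑ ν ∈ Finset.range m,
          1 / ((tsSigma T t - c) ^ (m - ν) * (t - c) ^ (ν + 1)))) :=
  fracDeriv_inv_pow_general T c hc m α hα t hne
end

section
/- Let 𝕋 ⊆ ℝ be the middle-thirds Cantor set, 𝕋 = {Σ_{k=1}^∞ a_k/3^k : a_k ∈ {0,2} for all k}, and let L = {Σ_{k=1}^{m} a_k/3^k + 1/3^{m+1} : m ∈ ℕ, m ≥ 1, a_k ∈ {0,2} for all 1 ≤ k ≤ m}. Let t = Σ_{k=1}^{m} a_k/3^k + 1/3^{m+1} ∈ L, let α ∈ (0,1], and let f : 𝕋 → ℝ be continuous at t. Then t is right-scattered with σ(t) = t + 1/3^{m+1}, and the number (f(t + 1/3^{m+1}) − f(t))·3^{(m+1)α} is a fractional derivative of f of order α at t. -/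
open Real Set Classical

/-- The middle-thirds Cantor set as a time scale. -/
def CantorTS : Set ℝ :=
  {x : ℝ | ∃ a : ℕ → ℝ, (∀ k, a k = 0 ∨ a k = 2) ∧
    HasSum (fun k : ℕ => a k / 3 ^ (k + 1)) x}


private lemma cantorGeomTail (p : ℕ) :
    HasSum (fun n : ℕ => (2:ℝ) / 3 ^ (n + p + 2)) (1 / 3 ^ (p + 1)) := by
  have h := hasSum_geometric_of_lt_one (by norm_num : (0:ℝ) ≤ 1/3) (by norm_num : (1:ℝ)/3 < 1)
  have h2 := h.mul_left ((2:ℝ) / 3 ^ (p + 2))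
  have hfun : (fun n : ℕ => (2:ℝ) / 3 ^ (p + 2) * (1/3) ^ n) =
      fun n : ℕ => (2:ℝ) / 3 ^ (n + p + 2) := by
    funext n
    rw [div_pow, one_pow, div_mul_div_comm, mul_one, ← pow_add]
    ring_nf
  have hval : (2:ℝ) / 3 ^ (p + 2) * (1 - 1/3)⁻¹ = 1 / 3 ^ (p + 1) := by
    rw [pow_succ]; field_simp; ring
  rw [hfun, hval] at h2
  exact h2

private lemma cantorCmp {b c : ℕ → ℝ} (hb : ∀ k, b k = 0 ∨ b k = 2)
    (hc : ∀ k, c k = 0 ∨ c k = 2)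
    {x y : ℝ} (hx : HasSum (fun k : ℕ => b k / 3 ^ (k + 1)) x)
    (hy : HasSum (fun k : ℕ => c k / 3 ^ (k + 1)) y)
    (k : ℕ) (heq : ∀ j < k, b j = c j) (hbk : b k = 0) (hck : c k = 2) :
    x + 1 / 3 ^ (k + 1) ≤ y := by
  set g : ℕ → ℝ := fun j : ℕ => (c j - b j) / 3 ^ (j + 1) with hgdef
  have hg : HasSum g (y - x) := by
    have h := hy.sub hx
    simpa [hgdef, sub_div] using h
  have hsum : Summable g := hg.summable
  have hsplit := Summable.sum_add_tsum_nat_add (f := g) (k+1) hsum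
  have htsum : ∑' j : ℕ, g j = y - x := hg.tsum_eq
  have hfin : ∑ i ∈ Finset.range (k+1), g i = 2 / 3 ^ (k + 1) := by
    rw [Finset.sum_range_succ]
    have h0 : ∑ i ∈ Finset.range k, g i = 0 := by
      apply Finset.sum_eq_zero
      intro j hj
      simp only [hgdef, ← heq j (Finset.mem_range.mp hj)]
      simp
    rw [h0, hgdef]
    simp only [hbk, hck]
    norm_num
  have htailsum : Summable fun n : ℕ => g (n + (k+1)) := (summable_nat_add_iff (k+1)).mpr hsum
  have htail : -(1 / 3 ^ (k + 1) : ℝ) ≤ ∑' n : ℕ, g (n + (k+1)) := by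
    have hneg := (cantorGeomTail k).neg
    have hle : ∀ n : ℕ, -((2:ℝ) / 3 ^ (n + k + 2)) ≤ g (n + (k+1)) := by
      intro n
      have hpow : ((3:ℝ)) ^ ((n + (k+1)) + 1) = 3 ^ (n + k + 2) := by ring_nf
      simp only [hgdef]
      rw [hpow, neg_div']
      have h1 : (0:ℝ) ≤ c (n + (k+1)) := by rcases hc (n + (k+1)) with h | h <;> simp [h]
      have h2 : b (n + (k+1)) ≤ 2 := by rcases hb (n + (k+1)) with h | h <;> simp [h]
      have hp : (0:ℝ) < 3 ^ (n + k + 2) := by positivity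
      exact (div_le_div_iff_of_pos_right hp).mpr (by linarith)
    have hv := hneg.tsum_eq
    calc -(1 / 3 ^ (k + 1) : ℝ) = ∑' n : ℕ, -((2:ℝ) / 3 ^ (n + k + 2)) := hv.symm
      _ ≤ _ := Summable.tsum_le_tsum hle hneg.summable htailsum
  have h2eq : (2:ℝ) / 3 ^ (k + 1) = 2 * (1 / 3 ^ (k + 1)) := by ring
  rw [htsum, hfin] at hsplit
  linarith [hsplit, htail, h2eq]

private lemma cantorTMem (m : ℕ) (a : ℕ → ℝ) (t : ℝ)
    (htdef : t = (∑ k ∈ Finset.range m, a k / 3 ^ (k + 1)) + 1 / 3 ^ (m + 1)) :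
    HasSum (fun k : ℕ => (if k < m then a k else if k = m then 0 else 2) / 3 ^ (k + 1)) t := by
  set tb : ℕ → ℝ := fun j => if j < m then a j else if j = m then 0 else 2 with htb
  set u : ℕ → ℝ := fun k => if k < m then a k / 3 ^ (k + 1) else 0 with hu
  set v : ℕ → ℝ := fun k => if k < m + 1 then 0 else 2 / 3 ^ (k + 1) with hv
  have hU : HasSum u (∑ k ∈ Finset.range m, a k / 3 ^ (k + 1)) := by
    have h1 : HasSum u (∑ k ∈ Finset.range m, u k) := by
      apply hasSum_sum_of_ne_finset_zero
      intro j hj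
      simp only [hu]
      rw [if_neg (by simpa using hj)]
    have h2 : (∑ k ∈ Finset.range m, u k) = ∑ k ∈ Finset.range m, a k / 3 ^ (k + 1) := by
      apply Finset.sum_congr rfl
      intro j hj
      simp only [hu]
      rw [if_pos (Finset.mem_range.mp hj)]
    rwa [h2] at h1
  have hV : HasSum v (1 / 3 ^ (m + 1)) := by
    have htail : HasSum (fun n : ℕ => v (n + (m+1))) (1 / 3 ^ (m + 1)) := by
      have h := cantorGeomTail m
      have : (fun n : ℕ => v (n + (m+1))) = fun n : ℕ => (2:ℝ) / 3 ^ (n + m + 2) := by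
        funext n
        simp only [hv]
        rw [if_neg (by omega)]
        ring_nf
      rw [this]
      exact h
    have := (hasSum_nat_add_iff (f := v) (m+1)).mp htail
    have hz : ∑ i ∈ Finset.range (m+1), v i = 0 := by
      apply Finset.sum_eq_zero
      intro j hj
      simp only [hv]
      rw [if_pos (Finset.mem_range.mp hj)]
    rwa [hz, add_zero] at this
  have hUV := hU.add hV
  rw [← htdef] at hUV
  have : (fun k : ℕ => tb k / 3 ^ (k + 1)) = fun k => u k + v k := by
    funext j
    simp only [htb, hu, hv]
    rcases lt_trichotomy j m with h | h | h
    · rw [if_pos h, if_pos h, if_pos (by omega)]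
      ring
    · rw [if_neg (by omega), if_pos h, if_neg (by omega), if_pos (by omega)]
      norm_num
    · rw [if_neg (by omega), if_neg (by omega), if_neg (by omega), if_neg (by omega)]
      ring
  rw [this]
  exact hUV

/-- On the Cantor set, a point `t = Σ_{k=1}^m a_k/3^k + 1/3^(m+1)` of the set `L`
is right-scattered with `σ t = t + 1/3^(m+1)`, and any `f` continuous at `t` has
`(f(t + 1/3^(m+1)) - f t)·3^((m+1)α)` as fractional derivative of order `α` at `t`. -/
theorem fracDeriv_cantor
    (m : ℕ) (hm : 1 ≤ m) (a : ℕ → ℝ) (ha : ∀ k, a k = 0 ∨ a k = 2)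
    (t : ℝ)
    (htdef : t = (∑ k ∈ Finset.range m, a k / 3 ^ (k + 1)) + 1 / 3 ^ (m + 1))
    (α : ℝ) (hα : α ∈ Set.Ioc (0:ℝ) 1)
    (f : ℝ → ℝ) (hf : ContinuousAtTS CantorTS f t) :
    RightScattered CantorTS t ∧
    tsSigma CantorTS t = t + 1 / 3 ^ (m + 1) ∧
    FracDerivAt CantorTS f α t
      ((f (t + 1 / 3 ^ (m + 1)) - f t) * (3:ℝ) ^ (((m:ℝ) + 1) * α)) := by
  classical
  have hh3pos : (0:ℝ) < 1 / 3 ^ (m + 1) := by positivity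
  -- digit sequences for t and for σ(t)
  set tb : ℕ → ℝ := fun j => if j < m then a j else if j = m then 0 else 2 with htbdef
  set sb : ℕ → ℝ := fun j => if j < m then a j else if j = m then 2 else 0 with hsbdef
  have htb01 : ∀ j, tb j = 0 ∨ tb j = 2 := by
    intro j
    simp only [htbdef]
    split_ifs with h1 h2
    exacts [ha j, Or.inl rfl, Or.inr rfl]
  have hsb01 : ∀ j, sb j = 0 ∨ sb j = 2 := by
    intro j
    simp only [hsbdef]
    split_ifs with h1 h2
    exacts [ha j, Or.inr rfl, Or.inl rfl]
  have htC : HasSum (fun k : ℕ => tb k / 3 ^ (k + 1)) t := cantorTMem m a t htdef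
  have hsC : HasSum (fun k : ℕ => sb k / 3 ^ (k + 1)) (t + 1 / 3 ^ (m + 1)) := by
    have h1 : HasSum (fun k : ℕ => sb k / 3 ^ (k + 1))
        (∑ k ∈ Finset.range (m+1), sb k / 3 ^ (k+1)) := by
      apply hasSum_sum_of_ne_finset_zero
      intro j hj
      have hjm : m < j := by simpa using hj
      simp only [hsbdef]
      rw [if_neg (by omega), if_neg (by omega)]
      simp
    have h2 : ∑ k ∈ Finset.range (m+1), sb k / 3 ^ (k+1) = t + 1 / 3 ^ (m + 1) := by
      rw [Finset.sum_range_succ]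
      have h3 : ∑ k ∈ Finset.range m, sb k / 3 ^ (k+1)
          = ∑ k ∈ Finset.range m, a k / 3 ^ (k+1) := by
        apply Finset.sum_congr rfl
        intro j hj
        simp only [hsbdef]
        rw [if_pos (Finset.mem_range.mp hj)]
      have h4 : sb m = 2 := by
        simp only [hsbdef]
        rw [if_neg (by omega)]
        simp
      rw [h3, h4, htdef]
      ring
    rwa [h2] at h1
  have htmem : t ∈ CantorTS := ⟨tb, htb01, htC⟩
  have hsmem : t + 1 / 3 ^ (m + 1) ∈ CantorTS := ⟨sb, hsb01, hsC⟩
  -- gap lemma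
  have gap : ∀ x ∈ CantorTS, t < x → t + 1 / 3 ^ (m + 1) ≤ x := by
    rintro x ⟨b, hb, hbx⟩ htx
    by_cases hall : ∀ j, b j = tb j
    · exfalso
      have hxt : x = t := by
        have : (fun k : ℕ => b k / 3 ^ (k + 1)) = fun k : ℕ => tb k / 3 ^ (k + 1) := by
          funext j; rw [hall j]
        rw [this] at hbx
        exact hbx.unique htC
      linarith
    · push_neg at hall
      set k := Nat.find hall with hk
      have hkne : b k ≠ tb k := Nat.find_spec hall
      have hkmin : ∀ j < k, b j = tb j := fun j hj => by
        have := Nat.find_min hall hj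
        exact not_not.mp this
      rcases hb k with hbk | hbk <;> rcases htb01 k with htk | htk
      · exact absurd (hbk.trans htk.symm) hkne
      · -- b k = 0, tb k = 2 : x < t, contradiction
        exfalso
        have := cantorCmp hb htb01 hbx htC k (fun j hj => (hkmin j hj)) hbk htk
        have hp : (0:ℝ) < 1 / 3 ^ (k + 1) := by positivity
        linarith
      · -- b k = 2, tb k = 0 : k ≤ m and x ≥ t + 1/3^(k+1)
        have hkm : k ≤ m := by
          by_contra hc
          push_neg at hc
          have : tb k = 2 := by
            simp only [htbdef]
            rw [if_neg (by omega), if_neg (by omega)]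
          rw [this] at htk
          norm_num at htk
        have hcmp := cantorCmp htb01 hb htC hbx k (fun j hj => (hkmin j hj).symm) htk hbk
        have hmono : (1:ℝ) / 3 ^ (m + 1) ≤ 1 / 3 ^ (k + 1) := by
          apply one_div_le_one_div_of_le (by positivity)
          exact pow_le_pow_right₀ (by norm_num) (by omega)
        linarith
      · exact absurd (hbk.trans htk.symm) hkne
  -- sigma
  have hne : ({s | s ∈ CantorTS ∧ t < s}).Nonempty :=
    ⟨t + 1 / 3 ^ (m + 1), hsmem, by linarith⟩
  have hsig : tsSigma CantorTS t = t + 1 / 3 ^ (m + 1) := by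
    rw [tsSigma, if_pos hne]
    apply le_antisymm
    · exact csInf_le ⟨t, fun s hs => hs.2.le⟩ ⟨hsmem, by linarith⟩
    · exact le_csInf hne fun s hs => gap s hs.1 hs.2
  -- main analytic estimate
  set L : ℝ := (f (t + 1 / 3 ^ (m + 1)) - f t) * (3:ℝ) ^ (((m:ℝ) + 1) * α) with hLdef
  have main : ∀ ε > (0:ℝ), ∃ δ > (0:ℝ), ∀ s ∈ CantorTS, |t - s| < δ →
      |(f (t + 1 / 3 ^ (m + 1)) - f s) - L * fpow α (t + 1 / 3 ^ (m + 1) - s)|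
        ≤ ε * |t + 1 / 3 ^ (m + 1) - s| ^ α := by
    intro ε hε
    set h3 : ℝ := 1 / 3 ^ (m + 1) with hh3def
    have hApos : (0:ℝ) < h3 ^ α := Real.rpow_pos_of_pos hh3pos α
    set M : ℝ := |f (t + h3) - f t| with hMdef
    have hM0 : (0:ℝ) ≤ M := abs_nonneg _
    obtain ⟨δ₁, hδ₁, Hc⟩ := hf (ε * h3 ^ α / 2) (by positivity)
    set δ₂ : ℝ := ε * h3 ^ α * h3 / (2 * (M + 1)) with hδ₂def
    have hδ₂ : (0:ℝ) < δ₂ := by positivity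
    refine ⟨min δ₁ (min δ₂ h3), by positivity, fun s hs hts => ?_⟩
    have hts1 : |t - s| < δ₁ := lt_of_lt_of_le hts (min_le_left _ _)
    have hts2 : |t - s| < δ₂ :=
      lt_of_lt_of_le hts ((min_le_right _ _).trans (min_le_left _ _))
    have hts3 : |t - s| < h3 :=
      lt_of_lt_of_le hts ((min_le_right _ _).trans (min_le_right _ _))
    have hst : s ≤ t := by
      by_contra hc
      push_neg at hc
      have hg := gap s hs hc
      have : h3 ≤ |t - s| := by
        rw [abs_sub_comm, abs_of_nonneg (by linarith)]
        linarith
      linarith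
    have habs : |t - s| = t - s := abs_of_nonneg (by linarith)
    set d : ℝ := t + h3 - s with hddef
    have hdge : h3 ≤ d := by linarith
    have hdpos : (0:ℝ) < d := by linarith
    have hfpow : fpow α d = d ^ α := by
      rw [fpow, Real.sign_of_pos hdpos, abs_of_pos hdpos, one_mul]
    have hdh1 : (1:ℝ) ≤ d / h3 := by
      rw [le_div_iff₀ hh3pos]
      linarith
    have hpow3 : (3:ℝ) ^ (((m:ℝ) + 1) * α) * d ^ α = (d / h3) ^ α := by
      have h1 : h3⁻¹ = (3:ℝ) ^ (m + 1) := by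
        rw [hh3def]
        simp
      have h2 : (3:ℝ) ^ (((m:ℝ) + 1) * α) = h3⁻¹ ^ α := by
        rw [h1, ← Real.rpow_natCast (3:ℝ) (m + 1), ← Real.rpow_mul (by norm_num)]
        push_cast
        ring_nf
      rw [h2, ← Real.mul_rpow (by positivity) hdpos.le, inv_mul_eq_div]
    have hr1 : (1:ℝ) ≤ (d / h3) ^ α := Real.one_le_rpow hdh1 hα.1.le
    have hrle : (d / h3) ^ α ≤ d / h3 := by
      calc (d / h3) ^ α ≤ (d / h3) ^ (1:ℝ) :=
            Real.rpow_le_rpow_of_exponent_le hdh1 hα.2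
        _ = d / h3 := Real.rpow_one _
    have key : (f (t + h3) - f s) - L * fpow α d
        = (f t - f s) + (f (t + h3) - f t) * (1 - (d / h3) ^ α) := by
      rw [hfpow, hLdef, mul_assoc, hpow3]
      ring
    have e1 : |f t - f s| ≤ ε * h3 ^ α / 2 := Hc s hs hts1
    have e2 : |(f (t + h3) - f t) * (1 - (d / h3) ^ α)| ≤ ε * h3 ^ α / 2 := by
      rw [abs_mul, abs_of_nonpos (by linarith : 1 - (d / h3) ^ α ≤ 0), neg_sub, ← hMdef]
      have h4 : (d / h3) ^ α - 1 ≤ δ₂ / h3 := by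
        have h5 : d / h3 - 1 ≤ δ₂ / h3 := by
          rw [div_sub_one hh3pos.ne', div_le_div_iff₀ hh3pos hh3pos]
          have : d - h3 = t - s := by rw [hddef]; ring
          nlinarith [hh3pos]
        linarith
      have h6 : M * ((d / h3) ^ α - 1) ≤ M * (δ₂ / h3) :=
        mul_le_mul_of_nonneg_left h4 hM0
      have h7 : δ₂ / h3 = ε * h3 ^ α / (2 * (M + 1)) := by
        rw [hδ₂def]
        field_simp
      have h8 : M * (ε * h3 ^ α / (2 * (M + 1))) ≤ ε * h3 ^ α / 2 := by
        have h9 : M * (ε * h3 ^ α / (2 * (M + 1))) = ε * h3 ^ α / 2 * (M / (M + 1)) := by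
          field_simp
        rw [h9]
        have h10 : M / (M + 1) ≤ 1 := by
          rw [div_le_one (by linarith)]
          linarith
        exact mul_le_of_le_one_right (by positivity) h10
      calc M * ((d / h3) ^ α - 1) ≤ M * (δ₂ / h3) := h6
        _ = M * (ε * h3 ^ α / (2 * (M + 1))) := by rw [h7]
        _ ≤ ε * h3 ^ α / 2 := h8
    have hda : h3 ^ α ≤ d ^ α := Real.rpow_le_rpow hh3pos.le hdge hα.1.le
    have habsd : |t + h3 - s| = d := abs_of_pos hdpos
    calc |(f (t + h3) - f s) - L * fpow α (t + h3 - s)|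
        = |(f t - f s) + (f (t + h3) - f t) * (1 - (d / h3) ^ α)| := by rw [← key]
      _ ≤ |f t - f s| + |(f (t + h3) - f t) * (1 - (d / h3) ^ α)| := abs_add_le _ _
      _ ≤ ε * h3 ^ α := by linarith
      _ ≤ ε * d ^ α := mul_le_mul_of_nonneg_left hda hε.le
      _ = ε * |t + h3 - s| ^ α := by rw [habsd]
  refine ⟨?_, hsig, ?_, ?_⟩
  · unfold RightScattered
    rw [hsig]
    linarith
  · intro _ ε hε
    obtain ⟨δ, hδ, H⟩ := main ε hε
    refine ⟨δ, hδ, fun s hs hd => ?_⟩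
    rw [hsig]
    exact H s hs hd
  · intro _ ε hε
    obtain ⟨δ, hδ, H⟩ := main ε hε
    refine ⟨δ, hδ, fun s hs h1 h2 => ?_⟩
    rw [hsig]
    apply H s hs
    rw [abs_of_nonneg (by linarith)]
    linarith
end
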